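/- Let X be a monotone determined space and x, y ∈ X. Then x ≪_d y if and only if for every net (x_j)_{j∈J} in X and every non-trivial ideal I on J such that (x_j) IS-converges to y with respect to I, we have {j ∈ J : x_j ≱ x} ∈ I. -/
import Mathlib


open Set Topology

universe u v

variable {X : Type u}

/-- The specialization order: `x ≤ y` iff `x` lies in the closure of `{y}`. -/
def sle [TopologicalSpace X] (x y : X) : Prop := x ∈ closure ({y} : Set X)

/-- `↑A` with respect to the specialization order. -/
def upSet [TopologicalSpace X] (A : Set X) : Set X := {x | ∃ a ∈ A, sle a x}

/-- `↓A` with respect to the specialization order. -/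
def downSet [TopologicalSpace X] (A : Set X) : Set X := {x | ∃ a ∈ A, sle x a}

/-- A subset is directed: nonempty and any two elements have an upper bound in it. -/
def DirSet [TopologicalSpace X] (D : Set X) : Prop :=
  D.Nonempty ∧ ∀ a ∈ D, ∀ b ∈ D, ∃ c ∈ D, sle a c ∧ sle b c

/-- `D →_τ x`: every open set containing `x` meets `D`. -/
def DConv [TopologicalSpace X] (D : Set X) (x : X) : Prop :=
  ∀ U : Set X, IsOpen U → x ∈ U → (D ∩ U).Nonempty

/-- Monotone determined open set. -/
def MDOpen [TopologicalSpace X] (U : Set X) : Prop :=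
  ∀ D : Set X, DirSet D → ∀ x ∈ U, DConv D x → (D ∩ U).Nonempty

/-- Monotone determined space: every monotone determined open set is open. -/
def MonDet (X : Type u) [TopologicalSpace X] : Prop :=
  ∀ U : Set X, MDOpen U → IsOpen U

/-- `x ≪_d y`. -/
def dwb [TopologicalSpace X] (x y : X) : Prop :=
  ∀ D : Set X, DirSet D → DConv D y → ∃ d ∈ D, sle x d

/-- `⇓_d x = {y | y ≪_d x}`. -/
def dDown [TopologicalSpace X] (x : X) : Set X := {y | dwb y x}

/-- `⇑_d x = {y | x ≪_d y}`. -/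
def dUp [TopologicalSpace X] (x : X) : Set X := {y | dwb x y}

/-- c-space. -/
def CSpace (X : Type u) [TopologicalSpace X] : Prop :=
  ∀ U : Set X, IsOpen U → ∀ y ∈ U, ∃ x : X, y ∈ interior (upSet {x}) ∧ upSet {x} ⊆ U

/-- Locally hypercompact space. -/
def LocallyHypercompact (X : Type u) [TopologicalSpace X] : Prop :=
  ∀ U : Set X, IsOpen U → ∀ x ∈ U, ∃ F : Set X, F.Finite ∧ F.Nonempty ∧
    x ∈ interior (upSet F) ∧ upSet F ⊆ U

/-- `A^{↓≪} = {x ∈ A : ⇓_d x ∩ A ≠ ∅}`. -/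
def lowApprox [TopologicalSpace X] (A : Set X) : Set X :=
  {x | x ∈ A ∧ (dDown x ∩ A).Nonempty}

/-- `A^{↑≪} = {x : ⇓_d x ⊆ ↓A}`. -/
def upApprox [TopologicalSpace X] (A : Set X) : Set X :=
  {x | dDown x ⊆ downSet A}

/-- `Ã = {x : ∃ directed D ⊆ ↓A ∩ ↓x with D →_τ x}`. -/
def tilde [TopologicalSpace X] (A : Set X) : Set X :=
  {x | ∃ D : Set X, DirSet D ∧ D ⊆ downSet A ∩ downSet {x} ∧ DConv D x}

/-- `Â = {x : ∃ directed D ⊆ ↓A with D →_τ x}`. -/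
def hatSet [TopologicalSpace X] (A : Set X) : Set X :=
  {x | ∃ D : Set X, DirSet D ∧ D ⊆ downSet A ∧ DConv D x}

/-- One-step closure. -/
def OneStepClosure (X : Type u) [TopologicalSpace X] : Prop :=
  ∀ A : Set X, tilde A = closure A

/-- Weak one-step closure. -/
def WeakOneStepClosure (X : Type u) [TopologicalSpace X] : Prop :=
  ∀ A : Set X, hatSet A = closure A

/-- d-meet continuous space. -/
def DMeetCont (X : Type u) [TopologicalSpace X] : Prop :=
  MonDet X ∧ ∀ (D : Set X) (x : X), DirSet D → DConv D x →
    x ∈ closure (downSet D ∩ downSet {x})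

/-- An ideal on `J`: closed under subsets and finite unions. -/
def IsIdeal {J : Type v} (I : Set (Set J)) : Prop :=
  (∀ A ∈ I, ∀ B : Set J, B ⊆ A → B ∈ I) ∧ ∀ A ∈ I, ∀ B ∈ I, A ∪ B ∈ I

/-- IS-convergence of a net with respect to an ideal. -/
def ISConv [TopologicalSpace X] {J : Type v} (xj : J → X) (I : Set (Set J)) (x : X) : Prop :=
  ∃ D : Set X, DirSet D ∧ DConv D x ∧ ∀ d ∈ D, {j | ¬ sle d (xj j)} ∈ I

/-- I-convergence of a net with respect to an (explicit) topology. -/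
def IConvT {J : Type v} (t : TopologicalSpace X) (xj : J → X) (I : Set (Set J)) (x : X) : Prop :=
  ∀ U : Set X, t.IsOpen U → x ∈ U → {j | xj j ∉ U} ∈ I

/-- ISL-convergence. -/
def ISLConv [TopologicalSpace X] {J : Type v} (xj : J → X) (I : Set (Set J)) (x : X) : Prop :=
  ISConv xj I x ∧ ∀ y : X, {j | ¬ sle y (xj j)} ∈ I → sle y x

/-- A directed family of nonempty finite subsets (Smyth preorder). -/
def DirFam [TopologicalSpace X] (F : Set (Set X)) : Prop :=
  (∀ G ∈ F, G.Finite ∧ G.Nonempty) ∧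
  ∀ G1 ∈ F, ∀ G2 ∈ F, ∃ G ∈ F, G ⊆ upSet G1 ∩ upSet G2

/-- `ℱ →_τ x`: every open set containing `x` contains a member of `ℱ`. -/
def FConv [TopologicalSpace X] (F : Set (Set X)) (x : X) : Prop :=
  ∀ U : Set X, IsOpen U → x ∈ U → ∃ G ∈ F, G ⊆ U

/-- IGS-convergence. -/
def IGSConv [TopologicalSpace X] {J : Type v} (xj : J → X) (I : Set (Set J)) (x : X) : Prop :=
  ∃ F : Set (Set X), DirFam F ∧ FConv F x ∧ ∀ G ∈ F, {j | xj j ∉ upSet G} ∈ I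

/-- IGSL-convergence. -/
def IGSLConv [TopologicalSpace X] {J : Type v} (xj : J → X) (I : Set (Set J)) (x : X) : Prop :=
  IGSConv xj I x ∧
    ∀ G : Set X, G.Finite → G.Nonempty → {j | xj j ∉ upSet G} ∈ I → x ∈ upSet G

/-- The Lawson topology: generated by the open sets of `τ` and complements of `↑y`. -/
def lawson (X : Type u) [TopologicalSpace X] : TopologicalSpace X :=
  TopologicalSpace.generateFrom {V | IsOpen V ∨ ∃ y : X, V = (upSet {y})ᶜ}

/-- The family `IS(X)`. -/
def memIS (X : Type u) [TopologicalSpace X] (U : Set X) : Prop :=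
  ∀ (J : Type u) [Preorder J], Nonempty J → (∀ a b : J, ∃ c, a ≤ c ∧ b ≤ c) →
    ∀ (xj : J → X) (I : Set (Set J)), IsIdeal I →
      ∀ x ∈ U, ISConv xj I x → {j | xj j ∉ U} ∈ I

/-- The family `IGS(X)`. -/
def memIGS (X : Type u) [TopologicalSpace X] (U : Set X) : Prop :=
  ∀ (J : Type u) [Preorder J], Nonempty J → (∀ a b : J, ∃ c, a ≤ c ∧ b ≤ c) →
    ∀ (xj : J → X) (I : Set (Set J)), IsIdeal I →
      ∀ x ∈ U, IGSConv xj I x → {j | xj j ∉ U} ∈ I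

lemma sle_refl [TopologicalSpace X] (x : X) : sle x x := subset_closure rfl

lemma sle_trans [TopologicalSpace X] {x y z : X} (h1 : sle x y) (h2 : sle y z) : sle x z := by
  have : closure ({y} : Set X) ⊆ closure ({z} : Set X) :=
    closure_minimal (singleton_subset_iff.2 h2) isClosed_closure
  exact this h1

/-- In a monotone determined space, `x ≪_d y` iff for every net and
every non-trivial ideal `I` such that the net IS-converges to `y`,
`{j : x_j ≱ x} ∈ I`. -/
theorem stmt_11 [TopologicalSpace X] [T0Space X] (hX : MonDet X) (x y : X) :
    dwb x y ↔
      ∀ (J : Type u) [Preorder J], Nonempty J → (∀ a b : J, ∃ c, a ≤ c ∧ b ≤ c) →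
        ∀ (xj : J → X) (I : Set (Set J)), IsIdeal I → (univ : Set J) ∉ I →
          ISConv xj I y → {j | ¬ sle x (xj j)} ∈ I := by
  constructor
  · rintro h J _ _ _ xj I hI _ ⟨D, hD, hDc, hmem⟩
    obtain ⟨d, hdD, hxd⟩ := h D hD hDc
    exact hI.1 _ (hmem d hdD) _ fun j hj hdj => hj (sle_trans hxd hdj)
  · intro h D hD hDc
    let J := {d : X // d ∈ D}
    letI : Preorder J :=
      { le := fun a b => sle a.1 b.1
        le_refl := fun a => sle_refl a.1
        le_trans := fun a b c => sle_trans }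
    let I : Set (Set J) := {A | ∃ d ∈ D, A ⊆ {j : J | ¬ sle d j.1}}
    obtain ⟨d0, hd0⟩ := hD.1
    have hne : Nonempty J := ⟨⟨d0, hd0⟩⟩
    have hdir : ∀ a b : J, ∃ c : J, a ≤ c ∧ b ≤ c := by
      rintro ⟨a, ha⟩ ⟨b, hb⟩
      obtain ⟨c, hc, h1, h2⟩ := hD.2 a ha b hb
      exact ⟨⟨c, hc⟩, h1, h2⟩
    have hideal : IsIdeal I := by
      constructor
      · rintro A ⟨d, hd, hA⟩ B hBA
        exact ⟨d, hd, hBA.trans hA⟩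
      · rintro A ⟨d1, hd1, hA⟩ B ⟨d2, hd2, hB⟩
        obtain ⟨c, hc, h1, h2⟩ := hD.2 d1 hd1 d2 hd2
        refine ⟨c, hc, fun j hj => ?_⟩
        intro hcj
        rcases hj with hj | hj
        · exact hA hj (sle_trans h1 hcj)
        · exact hB hj (sle_trans h2 hcj)
    have hnt : (univ : Set J) ∉ I := by
      rintro ⟨d, hd, hsub⟩
      exact hsub (mem_univ ⟨d, hd⟩) (sle_refl d)
    have hconv : ISConv (fun j : J => j.1) I y := by
      refine ⟨D, hD, hDc, fun d hd => ⟨d, hd, fun j hj => hj⟩⟩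
    obtain ⟨d, hd, hsub⟩ := h J hne hdir (fun j : J => j.1) I hideal hnt hconv
    refine ⟨d, hd, ?_⟩
    by_contra hxd
    exact hsub (show (⟨d, hd⟩ : J) ∈ {j : J | ¬ sle x j.1} from hxd) (sle_refl d)
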